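/- arXiv:2303.11612 — 4 statements merged into one kernel-verified Lean document; each statement's English description precedes it below -/
import Mathlib

section
/- Let M ∈ ℝ^{I×J} be a nonzero matrix. Then ‖M‖_F^2 ≤ rank(M) · ‖M M^T‖_F. In particular, for A ∈ ℝ^{I×J} and an orthonormal Q ∈ ℝ^{I×K}, ‖A − Q Q^T A‖_F^2 ≤ rank(A) · ‖A A^T − Q Q^T A A^T‖_F. -/
/-!
Write `S = M Mᵀ`, a symmetric matrix of rank `r = rank M` with eigenvalues `λᵢ`. Then
`‖M‖_F² = tr S = ∑ λᵢ` and `‖S‖_F² = tr S² = ∑ λᵢ²`, and Cauchy–Schwarz over the `r` nonzero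
eigenvalues gives `(tr S)² ≤ r · tr S²`, i.e. `‖M‖_F² ≤ √r ‖S‖_F ≤ r ‖S‖_F`.

For the residual, apply this to `P A` with `P = 1 - Q Qᵀ` an orthogonal projection:
`rank (P A) ≤ rank A`, `(P A)(P A)ᵀ = P (A Aᵀ) P`, and right multiplication by an orthogonal
projection does not increase the Frobenius norm.
-/

open Matrix

noncomputable section

/-- Frobenius norm of a real matrix. -/
def frob {m n : Type*} [Fintype m] [Fintype n] (A : Matrix m n ℝ) : ℝ :=
  Real.sqrt (∑ i, ∑ j, (A i j) ^ 2)

namespace Matrix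

lemma IsHermitian.trace_sq_le_rank_mul_trace_mul_self {n : Type*} [Fintype n] [DecidableEq n]
    {S : Matrix n n ℝ} (hS : S.IsHermitian) :
    S.trace ^ 2 ≤ S.rank * (S * S).trace := by
  have htrace : S.trace = ∑ i, hS.eigenvalues i := by simpa using hS.trace_eq_sum_eigenvalues
  have htrace_mul_self : (S * S).trace = ∑ i, hS.eigenvalues i ^ 2 := by
    conv_lhs => rw [hS.spectral_theorem, ← map_mul, Unitary.conjStarAlgAut_apply,
      trace_mul_cycle, Unitary.coe_star_mul_self, one_mul]
    simp [diagonal_mul_diagonal, trace_diagonal, sq]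
  rw [htrace, htrace_mul_self, hS.rank_eq_card_non_zero_eigs, Fintype.card_subtype,
    ← Finset.sum_filter_ne_zero]
  set nonzero : Finset n := {i | hS.eigenvalues i ≠ 0}
  calc (∑ i ∈ nonzero, hS.eigenvalues i) ^ 2
      ≤ (nonzero.card : ℝ) * ∑ i ∈ nonzero, hS.eigenvalues i ^ 2 := sq_sum_le_card_mul_sum_sq
    _ ≤ (nonzero.card : ℝ) * ∑ i, hS.eigenvalues i ^ 2 := by
        gcongr
        exact Finset.subset_univ _

end Matrix

section Frobenius

variable {l m n : Type*} [Fintype l] [Fintype m] [Fintype n]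

lemma frob_nonneg (A : Matrix m n ℝ) : 0 ≤ frob A :=
  Real.sqrt_nonneg _

lemma frob_sq (A : Matrix m n ℝ) : frob A ^ 2 = (A * Aᵀ).trace := by
  rw [frob, Real.sq_sqrt (by positivity)]
  simp [trace, mul_apply, sq]

lemma frob_sq_mul_of_isIdempotentElem {P : Matrix n n ℝ} (hPsymm : Pᵀ = P)
    (hP : IsIdempotentElem P) (B : Matrix m n ℝ) : frob (B * P) ^ 2 = (B * P * Bᵀ).trace := by
  rw [frob_sq, transpose_mul, hPsymm, ← Matrix.mul_assoc, Matrix.mul_assoc B, hP.eq]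

lemma frob_mul_le_of_isIdempotentElem [DecidableEq n] {P : Matrix n n ℝ} (hPsymm : Pᵀ = P)
    (hP : IsIdempotentElem P) (B : Matrix m n ℝ) : frob (B * P) ≤ frob B := by
  have hcompl_symm : (1 - P)ᵀ = 1 - P := by rw [transpose_sub, transpose_one, hPsymm]
  have hpythagoras : frob B ^ 2 = frob (B * P) ^ 2 + frob (B * (1 - P)) ^ 2 := by
    rw [frob_sq, frob_sq_mul_of_isIdempotentElem hPsymm hP,
      frob_sq_mul_of_isIdempotentElem hcompl_symm hP.one_sub, ← trace_add]
    simp [Matrix.mul_sub, Matrix.sub_mul]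
  refine (pow_le_pow_iff_left₀ (frob_nonneg _) (frob_nonneg _) two_ne_zero).mp ?_
  nlinarith [sq_nonneg (frob (B * (1 - P)))]

lemma frob_sq_le_rank_mul_frob_mul_transpose (M : Matrix m n ℝ) :
    frob M ^ 2 ≤ M.rank * frob (M * Mᵀ) := by
  classical
  have hS : (M * Mᵀ).IsHermitian := isHermitian_mul_conjTranspose_self M
  have htrace_sq : (M * Mᵀ * (M * Mᵀ)).trace = frob (M * Mᵀ) ^ 2 := by
    rw [frob_sq, transpose_mul, transpose_transpose]
  have key := hS.trace_sq_le_rank_mul_trace_mul_self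
  rw [rank_self_mul_transpose, ← frob_sq, htrace_sq] at key
  have hrank : (M.rank : ℝ) ≤ (M.rank : ℝ) ^ 2 := by exact_mod_cast Nat.le_self_pow two_ne_zero _
  refine (pow_le_pow_iff_left₀ (by positivity)
    (mul_nonneg (by positivity) (frob_nonneg _)) two_ne_zero).mp ?_
  calc (frob M ^ 2) ^ 2 ≤ M.rank * frob (M * Mᵀ) ^ 2 := key
    _ ≤ (M.rank : ℝ) ^ 2 * frob (M * Mᵀ) ^ 2 := by gcongr
    _ = (M.rank * frob (M * Mᵀ)) ^ 2 := by ring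

lemma frob_sq_sub_proj_le [DecidableEq l] [DecidableEq m] (A : Matrix m n ℝ) (Q : Matrix m l ℝ)
    (hQ : Qᵀ * Q = 1) :
    frob (A - Q * Qᵀ * A) ^ 2 ≤ A.rank * frob (A * Aᵀ - Q * Qᵀ * (A * Aᵀ)) := by
  set P : Matrix m m ℝ := 1 - Q * Qᵀ
  have hPsymm : Pᵀ = P := by simp [P, transpose_sub, transpose_mul]
  have hP : IsIdempotentElem P := IsIdempotentElem.one_sub <| by
    rw [IsIdempotentElem, Matrix.mul_assoc, ← Matrix.mul_assoc Qᵀ, hQ, Matrix.one_mul]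
  have hgram : (P * A) * (P * A)ᵀ = P * (A * Aᵀ) * P := by
    rw [transpose_mul, hPsymm]
    simp only [Matrix.mul_assoc]
  rw [show A - Q * Qᵀ * A = P * A by simp [P, Matrix.sub_mul],
    show A * Aᵀ - Q * Qᵀ * (A * Aᵀ) = P * (A * Aᵀ) by simp [P, Matrix.sub_mul]]
  calc frob (P * A) ^ 2 ≤ (P * A).rank * frob ((P * A) * (P * A)ᵀ) :=
        frob_sq_le_rank_mul_frob_mul_transpose _
    _ ≤ A.rank * frob (P * (A * Aᵀ)) := by
        rw [hgram]
        gcongr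
        · exact frob_nonneg _
        · exact rank_mul_le_right P A
        · exact frob_mul_le_of_isIdempotentElem hPsymm hP _

end Frobenius

theorem stmt5_general {I J : ℕ} (M : Matrix (Fin I) (Fin J) ℝ) :
    frob M ^ 2 ≤ (M.rank : ℝ) * frob (M * Mᵀ) ∧
    ∀ (K : ℕ) (A : Matrix (Fin I) (Fin J) ℝ) (Q : Matrix (Fin I) (Fin K) ℝ),
      Qᵀ * Q = 1 →
      frob (A - Q * Qᵀ * A) ^ 2 ≤ (A.rank : ℝ) * frob (A * Aᵀ - Q * Qᵀ * (A * Aᵀ)) :=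
  ⟨frob_sq_le_rank_mul_frob_mul_transpose M, fun _ A Q hQ => frob_sq_sub_proj_le A Q hQ⟩

/-- `‖M‖_F^2 ≤ rank(M)·‖M Mᵀ‖_F`, and the consequence for projection residuals. -/
theorem stmt5 {I J : ℕ} (M : Matrix (Fin I) (Fin J) ℝ) (hM : M ≠ 0) :
    frob M ^ 2 ≤ (M.rank : ℝ) * frob (M * Mᵀ) ∧
    ∀ (K : ℕ) (A : Matrix (Fin I) (Fin J) ℝ) (Q : Matrix (Fin I) (Fin K) ℝ),
      Qᵀ * Q = 1 →
      frob (A - Q * Qᵀ * A) ^ 2 ≤ (A.rank : ℝ) * frob (A * Aᵀ - Q * Qᵀ * (A * Aᵀ)) :=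
  stmt5_general M

end
end

section
/- (Quasi-optimality bound of T-HOSVD type.) Let A be an order-N tensor in ℝ^{I_1×⋯×I_N} and for each n let Q_n ∈ ℝ^{I_n×μ_n} have orthonormal columns. Then ‖A − A ×_1 (Q_1 Q_1^T) ×_2 (Q_2 Q_2^T) ⋯ ×_N (Q_N Q_N^T)‖_F^2 ≤ ∑_{n=1}^N ‖A − A ×_n (Q_n Q_n^T)‖_F^2. -/
open Matrix

noncomputable section

/-- Frobenius norm of a tensor (any finitely indexed real array). -/
def tnorm {ι : Type*} [Fintype ι] (A : ι → ℝ) : ℝ :=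
  Real.sqrt (∑ x, A x ^ 2)

/-- Mode-`n` product of a tensor with a square matrix (keeps the dimensions). -/
def tmul {N : ℕ} {I : Fin N → ℕ} (A : (∀ n, Fin (I n)) → ℝ) (n : Fin N)
    (B : Matrix (Fin (I n)) (Fin (I n)) ℝ) : (∀ m, Fin (I m)) → ℝ :=
  fun x => ∑ j : Fin (I n), B (x n) j * A (Function.update x n j)

/-- The multi-mode product `A ×₁ P 1 ×₂ P 2 ⋯ ×_N P N` with square matrices. -/
def multiProj {N : ℕ} {I : Fin N → ℕ} (A : (∀ n, Fin (I n)) → ℝ)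
    (P : ∀ n, Matrix (Fin (I n)) (Fin (I n)) ℝ) : (∀ n, Fin (I n)) → ℝ :=
  fun x => ∑ j : ∀ n, Fin (I n), (∏ n, P n (x n) (j n)) * A j

/-- Simultaneous compression `A ×_m (Q m)ᵀ` over all modes `m ∈ S`. -/
def compress {N : ℕ} {I μ : Fin N → ℕ} (A : (∀ n, Fin (I n)) → ℝ)
    (S : Finset (Fin N)) (Q : ∀ n, Matrix (Fin (I n)) (Fin (μ n)) ℝ) :
    (∀ m, Fin (if m ∈ S then μ m else I m)) → ℝ :=
  fun x => ∑ j : ∀ m : {m : Fin N // m ∈ S}, Fin (I m.val),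
    (∏ m : {m : Fin N // m ∈ S}, Q m.val (j m) (Fin.cast (if_pos m.property) (x m.val))) *
      A (fun m => if h : m ∈ S then j ⟨m, h⟩ else Fin.cast (if_neg h) (x m))

/-- Mode-`n` product of a tensor with a (possibly rectangular) matrix. -/
def modeProd {N : ℕ} {I : Fin N → ℕ} {J : ℕ} (A : (∀ n, Fin (I n)) → ℝ)
    (n : Fin N) (B : Matrix (Fin J) (Fin (I n)) ℝ) :
    (∀ m, Fin (Function.update I n J m)) → ℝ :=
  fun x => ∑ i : Fin (I n),
    B (Fin.cast (Function.update_self n J I) (x n)) i *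
      A (fun m => if h : m = n then Fin.cast (congrArg I h).symm i
                  else Fin.cast (Function.update_of_ne h J I) (x m))

/-- Mode-`n` unfolding of a tensor. -/
def unfold {N : ℕ} {D : Fin N → ℕ} (A : (∀ m, Fin (D m)) → ℝ) (n : Fin N) :
    Matrix (Fin (D n)) (∀ m : {m : Fin N // m ≠ n}, Fin (D m.val)) ℝ :=
  Matrix.of fun i x =>
    A (fun m => if h : m = n then Fin.cast (congrArg D h).symm i else x ⟨m, h⟩)

/-!
On the Euclidean space of tensors, `A ↦ A ×ₙ (Qₙ Qₙᵀ)` is an orthogonal projection `pₙ`, and the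
multi-mode product is the composite `p₁ ⋯ p_N`. For an orthogonal projection `p`,
`a - p b = (a - p a) + p (a - b)` is an orthogonal decomposition and `‖p (a - b)‖ ≤ ‖a - b‖`, so
`‖a - p b‖² ≤ ‖a - p a‖² + ‖a - b‖²`; peeling off one projection at a time gives the bound.
-/

namespace LinearMap.IsSymmetricProjection

variable {𝕜 E : Type*} [RCLike 𝕜] [NormedAddCommGroup E] [InnerProductSpace 𝕜 E]
  {p : E →ₗ[𝕜] E}

theorem norm_apply_le (hp : p.IsSymmetricProjection) (a : E) : ‖p a‖ ≤ ‖a‖ := by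
  obtain ⟨K, _, rfl⟩ := isSymmetricProjection_iff_eq_coe_starProjection.mp hp
  exact K.norm_starProjection_apply_le a

theorem norm_sub_apply_sq (hp : p.IsSymmetricProjection) (a b : E) :
    ‖a - p b‖ ^ 2 = ‖a - p a‖ ^ 2 + ‖p (a - b)‖ ^ 2 := by
  have hortho : inner 𝕜 (a - p a) (p (a - b)) = 0 := by
    rw [← hp.isSymmetric, map_sub, ← Module.End.mul_apply, hp.isIdempotentElem.eq, sub_self,
      inner_zero_left]
  have hsplit : a - p b = (a - p a) + p (a - b) := by rw [map_sub]; abel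
  simp only [hsplit, sq, norm_add_sq_eq_norm_sq_add_norm_sq_of_inner_eq_zero _ _ hortho]

theorem norm_sub_list_prod_apply_sq_le {ps : List (E →ₗ[𝕜] E)}
    (hps : ∀ p ∈ ps, p.IsSymmetricProjection) (a : E) :
    ‖a - ps.prod a‖ ^ 2 ≤ (ps.map fun p => ‖a - p a‖ ^ 2).sum := by
  induction ps with
  | nil => simp
  | cons p ps ih =>
    have hp := hps p List.mem_cons_self
    have ih := ih fun q hq => hps q (List.mem_cons_of_mem p hq)
    rw [List.prod_cons, Module.End.mul_apply, List.map_cons, List.sum_cons]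
    calc ‖a - p (ps.prod a)‖ ^ 2 = ‖a - p a‖ ^ 2 + ‖p (a - ps.prod a)‖ ^ 2 :=
          hp.norm_sub_apply_sq a _
      _ ≤ ‖a - p a‖ ^ 2 + ‖a - ps.prod a‖ ^ 2 := by gcongr; exact hp.norm_apply_le _
      _ ≤ _ := by gcongr

end LinearMap.IsSymmetricProjection

theorem Matrix.isIdempotentElem_mul_transpose_self {m k R : Type*} [Fintype m] [Fintype k]
    [DecidableEq k] [Semiring R] {Q : Matrix m k R} (hQ : Qᵀ * Q = 1) :
    IsIdempotentElem (Q * Qᵀ) := by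
  rw [IsIdempotentElem, Matrix.mul_assoc, ← Matrix.mul_assoc Qᵀ, hQ, Matrix.one_mul]

section ModeProducts

variable {N : ℕ} {I : Fin N → ℕ}

theorem multiProj_one (A : (∀ n, Fin (I n)) → ℝ) : multiProj A (fun _ => 1) = A := by
  funext x
  rw [multiProj, Fintype.sum_eq_single x]
  · simp
  · intro j hj
    obtain ⟨n, hn⟩ := Function.ne_iff.mp hj
    rw [Finset.prod_eq_zero (Finset.mem_univ n) (by simp [Ne.symm hn]), zero_mul]

theorem prod_update_apply (P : ∀ n, Matrix (Fin (I n)) (Fin (I n)) ℝ) (n : Fin N)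
    (B : Matrix (Fin (I n)) (Fin (I n)) ℝ) (x k : ∀ m, Fin (I m)) (i : Fin (I n)) :
    ∏ m, Function.update P n B m (Function.update x n i m) (k m) =
      B i (k n) * ∏ m ∈ {n}ᶜ, P m (x m) (k m) := by
  rw [Fintype.prod_eq_mul_prod_compl n]
  simp only [Function.update_self]
  congr 1
  refine Finset.prod_congr rfl fun m hm => ?_
  have hmn : m ≠ n := by simpa using hm
  rw [Function.update_of_ne hmn, Function.update_of_ne hmn]

theorem tmul_multiProj (A : (∀ n, Fin (I n)) → ℝ)
    (P : ∀ n, Matrix (Fin (I n)) (Fin (I n)) ℝ) (n : Fin N)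
    (B : Matrix (Fin (I n)) (Fin (I n)) ℝ) :
    tmul (multiProj A P) n B = multiProj A (Function.update P n (B * P n)) := by
  funext x
  simp only [tmul, multiProj, Finset.mul_sum]
  rw [Finset.sum_comm]
  refine Finset.sum_congr rfl fun k _ => ?_
  have hP : ∀ i, ∏ m, P m (Function.update x n i m) (k m) =
      P n i (k n) * ∏ m ∈ {n}ᶜ, P m (x m) (k m) := fun i => by
    simpa using prod_update_apply P n (P n) x k i
  have hB := prod_update_apply P n (B * P n) x k (x n)
  rw [Function.update_eq_self] at hB
  simp only [hP, hB, Matrix.mul_apply, Finset.sum_mul]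
  exact Finset.sum_congr rfl fun j _ => by ring

theorem tmul_tmul (A : (∀ n, Fin (I n)) → ℝ) (n : Fin N)
    (B C : Matrix (Fin (I n)) (Fin (I n)) ℝ) :
    tmul (tmul A n B) n C = tmul A n (C * B) := by
  funext x
  simp only [tmul, Finset.mul_sum, Matrix.mul_apply, Finset.sum_mul, Function.update_idem,
    Function.update_self]
  rw [Finset.sum_comm]
  exact Finset.sum_congr rfl fun k _ => Finset.sum_congr rfl fun j _ => by ring

def updateSwap (n : Fin N) : Equiv.Perm ((∀ m, Fin (I m)) × Fin (I n)) :=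
  Function.Involutive.toPerm (fun p => (Function.update p.1 n p.2, p.1 n)) fun p => by
    simp

@[simp]
theorem updateSwap_apply (n : Fin N) (p : (∀ m, Fin (I m)) × Fin (I n)) :
    updateSwap n p = (Function.update p.1 n p.2, p.1 n) :=
  rfl

theorem sum_tmul_mul (A C : (∀ n, Fin (I n)) → ℝ) (n : Fin N)
    (B : Matrix (Fin (I n)) (Fin (I n)) ℝ) :
    ∑ x, tmul A n B x * C x = ∑ x, A x * tmul C n Bᵀ x := by
  simp only [tmul, Finset.sum_mul, Finset.mul_sum]
  rw [← Fintype.sum_prod_type', ← Fintype.sum_prod_type', ← Equiv.sum_comp (updateSwap n)]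
  refine Finset.sum_congr rfl fun p _ => ?_
  simp only [updateSwap_apply, Function.update_idem, Function.update_self,
    Function.update_eq_self, Matrix.transpose_apply]
  ring

end ModeProducts

section EuclideanTensors

variable {N : ℕ} {I : Fin N → ℕ}

theorem tnorm_eq_norm_toLp {ι : Type*} [Fintype ι] (A : ι → ℝ) :
    tnorm A = ‖WithLp.toLp 2 A‖ := by
  simp [tnorm, EuclideanSpace.norm_eq]

def tmulLin (n : Fin N) (B : Matrix (Fin (I n)) (Fin (I n)) ℝ) :
    Module.End ℝ (EuclideanSpace ℝ (∀ m, Fin (I m))) where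
  toFun A := WithLp.toLp 2 (tmul A.ofLp n B)
  map_add' A C := by
    ext x
    simp [tmul, mul_add, Finset.sum_add_distrib]
  map_smul' c A := by
    ext x
    simp [tmul, Finset.mul_sum, mul_left_comm]

@[simp]
theorem tmulLin_apply (n : Fin N) (B : Matrix (Fin (I n)) (Fin (I n)) ℝ)
    (A : EuclideanSpace ℝ (∀ m, Fin (I m))) :
    tmulLin n B A = WithLp.toLp 2 (tmul A.ofLp n B) :=
  rfl

theorem tmulLin_mul (n : Fin N) (B C : Matrix (Fin (I n)) (Fin (I n)) ℝ) :
    tmulLin n (B * C) = tmulLin n B * tmulLin n C := by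
  ext A : 1
  simp [tmul_tmul]

theorem isSymmetricProjection_tmulLin {n : Fin N} {B : Matrix (Fin (I n)) (Fin (I n)) ℝ}
    (hB : B.IsSymm) (hB' : IsIdempotentElem B) : (tmulLin n B).IsSymmetricProjection where
  isIdempotentElem := by rw [IsIdempotentElem, ← tmulLin_mul, hB'.eq]
  isSymmetric A C := by
    simp only [PiLp.inner_apply, tmulLin_apply, RCLike.inner_apply, conj_trivial]
    rw [sum_tmul_mul, hB.eq]

theorem toLp_multiProj_eq_list_prod {l : List (Fin N)} (hl : l.Nodup)
    {P : ∀ n, Matrix (Fin (I n)) (Fin (I n)) ℝ} (hP : ∀ m ∉ l, P m = 1)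
    (A : (∀ n, Fin (I n)) → ℝ) :
    WithLp.toLp 2 (multiProj A P) = (l.map fun n => tmulLin n (P n)).prod (WithLp.toLp 2 A) := by
  induction l generalizing P with
  | nil =>
    have hone : P = fun _ => 1 := funext fun m => hP m List.not_mem_nil
    simp [hone, multiProj_one]
  | cons n l ih =>
    obtain ⟨hnl, hl⟩ := List.nodup_cons.mp hl
    have hP' : ∀ m ∉ l, Function.update P n 1 m = 1 := fun m hm => by
      by_cases hmn : m = n
      · subst hmn
        exact Function.update_self _ _ _
      · rw [Function.update_of_ne hmn, hP m (by simp [hmn, hm])]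
    have hmap : l.map (fun m => tmulLin m (Function.update P n 1 m)) =
        l.map fun m => tmulLin m (P m) :=
      List.map_congr_left fun m hm => by rw [Function.update_of_ne (ne_of_mem_of_not_mem hm hnl)]
    rw [List.map_cons, List.prod_cons, Module.End.mul_apply, ← hmap, ← ih hl hP', tmulLin_apply,
      tmul_multiProj]
    simp [Function.update_idem]

end EuclideanTensors

/-- Quasi-optimality bound of T-HOSVD type. -/
theorem stmt6 {N : ℕ} {I μ : Fin N → ℕ} (A : (∀ n, Fin (I n)) → ℝ)
    (Q : ∀ n, Matrix (Fin (I n)) (Fin (μ n)) ℝ) (hQ : ∀ n, (Q n)ᵀ * Q n = 1) :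
    tnorm (fun x => A x - multiProj A (fun n => Q n * (Q n)ᵀ) x) ^ 2 ≤
      ∑ n : Fin N, tnorm (fun x => A x - tmul A n (Q n * (Q n)ᵀ) x) ^ 2 := by
  change tnorm (A - multiProj A _) ^ 2 ≤ ∑ n, tnorm (A - tmul A n _) ^ 2
  have hproj (n : Fin N) : (tmulLin n (Q n * (Q n)ᵀ)).IsSymmetricProjection :=
    isSymmetricProjection_tmulLin
      (by rw [Matrix.IsSymm, Matrix.transpose_mul, Matrix.transpose_transpose])
      (Matrix.isIdempotentElem_mul_transpose_self (hQ n))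
  have hbound := LinearMap.IsSymmetricProjection.norm_sub_list_prod_apply_sq_le
    (ps := (List.finRange N).map fun n => tmulLin n (Q n * (Q n)ᵀ)) (by simpa using hproj)
    (WithLp.toLp 2 A)
  rw [← toLp_multiProj_eq_list_prod (List.nodup_finRange N) (by simp)] at hbound
  simpa [tnorm_eq_norm_toLp, Fin.sum_univ_def, Function.comp_def] using hbound

end
end

section
/- (ST-HOSVD telescoping error bound.) Let A ∈ ℝ^{I_1×⋯×I_N} and let Q_n ∈ ℝ^{I_n×μ_n} have orthonormal columns, n = 1,…,N. Then ‖A − A ×_1 (Q_1 Q_1^T) ⋯ ×_N (Q_N Q_N^T)‖_F^2 ≤ ‖A ×_1 (I − Q_1 Q_1^T)‖_F^2 + ‖(A ×_1 Q_1^T) ×_2 (I − Q_2 Q_2^T)‖_F^2 + ⋯ + ‖(A ×_1 Q_1^T ×_2 Q_2^T ⋯ ×_{N−1} Q_{N−1}^T) ×_N (I − Q_N Q_N^T)‖_F^2. -/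
open Matrix

noncomputable section

/-!
Write `P n = Q n * (Q n)ᵀ`; since `Q n` has orthonormal columns, `P n` is an orthogonal
projection. On tensors the multi-mode product is the Kronecker product `⊗ₘ P m`, and
`1 - ⊗ₘ P m` telescopes into `∑ₙ P 1 ⊗ ⋯ ⊗ P (n-1) ⊗ (1 - P n) ⊗ 1 ⊗ ⋯ ⊗ 1`. For `n < n'`
the `n`-th and `n'`-th terms carry `1 - P n` and `P n` in mode `n`, so they are orthogonal and
the squared error is exactly the sum of the squared norms of the terms. The `n`-th term loses
no norm when modes `m < n` are compressed by `(Q m)ᵀ`, because `Q m * (Q m)ᵀ = P m` there.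
-/

namespace Matrix

section PiKron

variable {ι R : Type*} [Fintype ι] {α β γ : ι → Type*}

/-- On tensors, `piKron M *ᵥ A` is `A ×₁ M 1 ⋯ ×_N M N`. -/
def piKron [CommMonoid R] (M : ∀ i, Matrix (α i) (β i) R) : Matrix (∀ i, α i) (∀ i, β i) R :=
  of fun x y => ∏ i, M i (x i) (y i)

@[simp]
theorem piKron_apply [CommMonoid R] (M : ∀ i, Matrix (α i) (β i) R) (x : ∀ i, α i)
    (y : ∀ i, β i) : piKron M x y = ∏ i, M i (x i) (y i) :=
  rfl

theorem transpose_piKron [CommMonoid R] (M : ∀ i, Matrix (α i) (β i) R) :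
    (piKron M)ᵀ = piKron fun i => (M i)ᵀ :=
  rfl

theorem piKron_mul_piKron [CommSemiring R] [DecidableEq ι] [∀ i, Fintype (β i)]
    (M : ∀ i, Matrix (α i) (β i) R) (M' : ∀ i, Matrix (β i) (γ i) R) :
    piKron M * piKron M' = piKron fun i => M i * M' i := by
  ext x z
  simp only [mul_apply, piKron_apply, Finset.prod_univ_sum, Fintype.piFinset_univ,
    Finset.prod_mul_distrib]

theorem piKron_one [CommMonoidWithZero R] [∀ i, DecidableEq (α i)] :
    piKron (fun i => (1 : Matrix (α i) (α i) R)) = 1 := by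
  ext x y
  simp only [piKron_apply, one_apply, Fintype.prod_boole, funext_iff]

theorem piKron_eq_zero [CommMonoidWithZero R] {M : ∀ i, Matrix (α i) (β i) R} {i : ι}
    (h : M i = 0) : piKron M = 0 := by
  ext x y
  exact Finset.prod_eq_zero (Finset.mem_univ i) (by rw [h, zero_apply])

theorem piKron_update_one_mulVec_apply [CommSemiring R] [DecidableEq ι] [∀ i, Fintype (α i)]
    [∀ i, DecidableEq (α i)] (i : ι) (M : Matrix (α i) (α i) R) (v : (∀ i, α i) → R)
    (x : ∀ i, α i) :
    (piKron (Function.update (fun i => (1 : Matrix (α i) (α i) R)) i M) *ᵥ v) x =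
      ∑ t, M (x i) t * v (Function.update x i t) := by
  have entry : ∀ y : ∀ i, α i,
      piKron (Function.update (fun i => (1 : Matrix (α i) (α i) R)) i M) x y =
        M (x i) (y i) * if Function.update x i (y i) = y then 1 else 0 := by
    intro y
    rw [piKron_apply, ← Finset.mul_prod_erase _ _ (Finset.mem_univ i), Function.update_self,
      Finset.prod_congr rfl fun m hm => by
        rw [Function.update_of_ne (Finset.ne_of_mem_erase hm), one_apply], Finset.prod_boole]
    simp [Function.update_eq_iff]
  simp only [mulVec, dotProduct, entry]
  rw [← Finset.sum_fiberwise Finset.univ (fun y => y i)]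
  refine Finset.sum_congr rfl fun t _ => ?_
  rw [Finset.sum_eq_single_of_mem (Function.update x i t) (by simp)]
  · simp
  · intro y hy hne
    rw [(Finset.mem_filter.1 hy).2, if_neg (Ne.symm hne), mul_zero, zero_mul]

end PiKron

section OrthogonalProjection

variable {n R : Type*} [Fintype n] {P : Matrix n n R}

theorem transpose_eq_of_transpose_mul_self_eq [CommSemiring R] (hP : Pᵀ * P = P) :
    Pᵀ = P := by
  rw [← hP, transpose_mul, transpose_transpose]

theorem mul_self_eq_of_transpose_mul_self_eq [CommSemiring R] (hP : Pᵀ * P = P) : P * P = P :=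
  calc P * P = Pᵀ * P := by rw [transpose_eq_of_transpose_mul_self_eq hP]
    _ = P := hP

theorem transpose_one_sub_mul_one_sub [DecidableEq n] [CommRing R] (hP : Pᵀ * P = P) :
    (1 - P)ᵀ * (1 - P) = 1 - P := by
  rw [transpose_sub, transpose_one, transpose_eq_of_transpose_mul_self_eq hP, Matrix.sub_mul,
    Matrix.one_mul, Matrix.mul_sub, Matrix.mul_one, mul_self_eq_of_transpose_mul_self_eq hP,
    sub_self, sub_zero]

end OrthogonalProjection

end Matrix

theorem Fin.prod_sub_prod_eq_sum {R : Type*} [CommRing R] {N : ℕ} (a b : Fin N → R) :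
    ∏ m, a m - ∏ m, b m =
      ∑ n, ∏ m, if m < n then b m else if m = n then a m - b m else a m := by
  induction N with
  | zero => simp
  | succ N ih =>
    rw [Fin.sum_univ_succ, Fin.prod_univ_succ, Fin.prod_univ_succ, Fin.prod_univ_succ]
    simp only [Fin.succ_lt_succ_iff, Fin.succ_inj, Fin.succ_pos, Fin.succ_ne_zero,
      Fin.not_lt_zero, lt_irrefl, if_true, if_false, Fin.prod_univ_succ]
    rw [← Finset.mul_sum, ← ih]
    ring

namespace Matrix

section Telescope

variable {N : ℕ} {R : Type*} [CommRing R] {α : Fin N → Type*} [∀ m, DecidableEq (α m)]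

def telescopeFactors (P : ∀ m, Matrix (α m) (α m) R) (n m : Fin N) : Matrix (α m) (α m) R :=
  if m < n then P m else if m = n then 1 - P m else 1

theorem one_sub_piKron_eq_sum (P : ∀ m, Matrix (α m) (α m) R) :
    1 - piKron P = ∑ n, piKron (telescopeFactors P n) := by
  ext x y
  rw [← piKron_one]
  simp only [sub_apply, piKron_apply, sum_apply, Fin.prod_sub_prod_eq_sum]
  refine Finset.sum_congr rfl fun n _ => Finset.prod_congr rfl fun m _ => ?_
  unfold telescopeFactors
  split_ifs <;> rfl

theorem telescopeFactors_eq_update (P : ∀ m, Matrix (α m) (α m) R) (n : Fin N) :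
    telescopeFactors P n = Function.update (fun m => if m < n then P m else 1) n (1 - P n) := by
  funext m
  rcases eq_or_ne m n with rfl | h
  · simp [telescopeFactors]
  · simp [telescopeFactors, h]

variable [∀ m, Fintype (α m)] {P : ∀ m, Matrix (α m) (α m) R}

theorem transpose_telescopeFactors_mul_self (hP : ∀ m, (P m)ᵀ * P m = P m) (n m : Fin N) :
    (telescopeFactors P n m)ᵀ * telescopeFactors P n m = telescopeFactors P n m := by
  unfold telescopeFactors
  split_ifs
  · exact hP m
  · exact transpose_one_sub_mul_one_sub (hP m)
  · rw [transpose_one, Matrix.one_mul]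

theorem transpose_piKron_telescopeFactors_mul_self (hP : ∀ m, (P m)ᵀ * P m = P m) (n : Fin N) :
    (piKron (telescopeFactors P n))ᵀ * piKron (telescopeFactors P n) =
      piKron (telescopeFactors P n) := by
  rw [transpose_piKron, piKron_mul_piKron]
  exact congrArg piKron (funext (transpose_telescopeFactors_mul_self hP n))

theorem transpose_piKron_telescopeFactors_mul_of_ne (hP : ∀ m, (P m)ᵀ * P m = P m)
    {n n' : Fin N} (h : n ≠ n') :
    (piKron (telescopeFactors P n))ᵀ * piKron (telescopeFactors P n') = 0 := by
  rw [transpose_piKron, piKron_mul_piKron]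
  rcases h.lt_or_gt with h | h
  · refine piKron_eq_zero (i := n) ?_
    simp only [telescopeFactors, lt_irrefl, if_false, if_true, h]
    rw [transpose_sub, transpose_one, Matrix.sub_mul, Matrix.one_mul, hP, sub_self]
  · refine piKron_eq_zero (i := n') ?_
    simp only [telescopeFactors, lt_irrefl, if_false, if_true, h]
    rw [transpose_eq_of_transpose_mul_self_eq (hP n'), Matrix.mul_sub, Matrix.mul_one,
      mul_self_eq_of_transpose_mul_self_eq (hP n'), sub_self]

end Telescope

end Matrix

open Matrix

section FrobeniusNorm

variable {ι κ : Type*} [Fintype ι] [Fintype κ]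

theorem tnorm_sq_eq_dotProduct (v : ι → ℝ) : tnorm v ^ 2 = v ⬝ᵥ v := by
  rw [tnorm, Real.sq_sqrt (Finset.sum_nonneg fun _ _ => sq_nonneg _)]
  simp only [dotProduct, sq]

theorem mulVec_dotProduct_mulVec {κ' R : Type*} [Fintype κ'] [CommSemiring R]
    (M : Matrix κ ι R) (M' : Matrix κ κ' R) (v : ι → R) (w : κ' → R) :
    M *ᵥ v ⬝ᵥ M' *ᵥ w = v ⬝ᵥ (Mᵀ * M') *ᵥ w := by
  rw [← vecMul_transpose, ← dotProduct_mulVec, mulVec_mulVec]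

theorem tnorm_mulVec_sq (M : Matrix κ ι ℝ) (v : ι → ℝ) :
    tnorm (M *ᵥ v) ^ 2 = v ⬝ᵥ (Mᵀ * M) *ᵥ v := by
  rw [tnorm_sq_eq_dotProduct, mulVec_dotProduct_mulVec]

theorem tnorm_sum_mulVec_sq (K : κ → Matrix ι ι ℝ) (hK : Pairwise fun a b => (K a)ᵀ * K b = 0)
    (v : ι → ℝ) : tnorm ((∑ a, K a) *ᵥ v) ^ 2 = ∑ a, tnorm (K a *ᵥ v) ^ 2 := by
  simp only [tnorm_sq_eq_dotProduct, sum_mulVec, sum_dotProduct, dotProduct_sum]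
  refine Finset.sum_congr rfl fun a _ => Finset.sum_eq_single a (fun b _ hb => ?_) (by simp)
  rw [mulVec_dotProduct_mulVec, hK hb, zero_mulVec, dotProduct_zero]

end FrobeniusNorm

section ModeProducts

variable {N : ℕ} {I μ : Fin N → ℕ}

theorem multiProj_eq_piKron_mulVec (A : (∀ n, Fin (I n)) → ℝ)
    (P : ∀ n, Matrix (Fin (I n)) (Fin (I n)) ℝ) : multiProj A P = piKron P *ᵥ A :=
  rfl

theorem tmul_eq_piKron_mulVec (A : (∀ n, Fin (I n)) → ℝ) (n : Fin N)
    (M : Matrix (Fin (I n)) (Fin (I n)) ℝ) :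
    tmul A n M =
      piKron (Function.update (fun m => (1 : Matrix (Fin (I m)) (Fin (I m)) ℝ)) n M) *ᵥ A := by
  ext x
  rw [piKron_update_one_mulVec_apply]
  rfl

def compressFactor (S : Finset (Fin N)) (Q : ∀ n, Matrix (Fin (I n)) (Fin (μ n)) ℝ)
    (m : Fin N) : Matrix (Fin (I m)) (Fin (if m ∈ S then μ m else I m)) ℝ :=
  if h : m ∈ S then (Q m).submatrix id (finCongr (if_pos h))
  else (1 : Matrix (Fin (I m)) (Fin (I m)) ℝ).submatrix id (finCongr (if_neg h))

variable {S : Finset (Fin N)} (Q : ∀ n, Matrix (Fin (I n)) (Fin (μ n)) ℝ)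

theorem compressFactor_of_mem {m : Fin N} (h : m ∈ S) :
    compressFactor S Q m = (Q m).submatrix id (finCongr (if_pos h)) :=
  dif_pos h

theorem compressFactor_of_notMem {m : Fin N} (h : m ∉ S) :
    compressFactor S Q m =
      (1 : Matrix (Fin (I m)) (Fin (I m)) ℝ).submatrix id (finCongr (if_neg h)) :=
  dif_neg h

theorem compress_eq_transpose_piKron_mulVec (A : (∀ n, Fin (I n)) → ℝ) :
    compress A S Q = (piKron (compressFactor S Q))ᵀ *ᵥ A := by
  ext x
  let e := Equiv.piEquivPiSubtypeProd (· ∈ S) (fun m => Fin (I m))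
  rw [mulVec, dotProduct, ← e.symm.sum_comp, Fintype.sum_prod_type]
  refine Finset.sum_congr rfl fun k _ => ?_
  let b₀ : ∀ m : {m // m ∉ S}, Fin (I m) := fun m => Fin.cast (if_neg m.2) (x m)
  have entry : ∀ b, (piKron (compressFactor S Q))ᵀ x (e.symm (k, b)) =
      (∏ m : {m // m ∈ S}, Q m.1 (k m) (Fin.cast (if_pos m.2) (x m.1))) *
        if b = b₀ then (1 : ℝ) else 0 := by
    intro b
    rw [transpose_apply, piKron_apply, ← Fintype.prod_subtype_mul_prod_subtype (· ∈ S)]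
    congr 1
    · refine Finset.prod_congr (by ext; simp) fun m _ => ?_
      rw [compressFactor_of_mem Q m.2]
      simp [e]
    · simp only [funext_iff, ← Fintype.prod_boole]
      refine Finset.prod_congr rfl fun m _ => ?_
      rw [compressFactor_of_notMem Q m.2]
      simp [e, dif_neg m.2, one_apply, b₀]
  simp only [entry, mul_ite, mul_one, mul_zero, ite_mul, zero_mul, Finset.sum_ite_eq',
    Finset.mem_univ, if_true]
  rfl

theorem tnorm_tmul_compress_sq (A : (∀ n, Fin (I n)) → ℝ) {n : Fin N} (hn : n ∉ S)
    (M : Matrix (Fin (I n)) (Fin (I n)) ℝ) :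
    tnorm (tmul (compress A S Q) n
        (M.submatrix (Fin.cast (if_neg hn)) (Fin.cast (if_neg hn)))) ^ 2 =
      A ⬝ᵥ piKron (Function.update (fun m => if m ∈ S then Q m * (Q m)ᵀ else 1) n (Mᵀ * M)) *ᵥ
        A := by
  rw [tmul_eq_piKron_mulVec, compress_eq_transpose_piKron_mulVec, mulVec_mulVec, tnorm_mulVec_sq,
    transpose_mul, transpose_transpose, transpose_piKron, transpose_piKron, piKron_mul_piKron,
    piKron_mul_piKron, piKron_mul_piKron]
  congr
  funext m
  by_cases hm : m ∈ S
  · have hmn : m ≠ n := fun h => hn (h ▸ hm)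
    simp [hm, hmn, compressFactor_of_mem Q hm, transpose_submatrix]
  by_cases hmn : m = n
  · subst hmn
    have e : (Fin.cast (if_neg hm) : Fin (if m ∈ S then μ m else I m) → Fin (I m)) =
        finCongr (if_neg hm) := rfl
    simp [hm, compressFactor_of_notMem Q hm, transpose_submatrix, e]
  · simp [hm, hmn, compressFactor_of_notMem Q hm, transpose_submatrix]

end ModeProducts

/-- ST-HOSVD telescoping error bound (processing order `1, …, N`). -/
theorem stmt7 {N : ℕ} {I μ : Fin N → ℕ} (A : (∀ n, Fin (I n)) → ℝ)
    (Q : ∀ n, Matrix (Fin (I n)) (Fin (μ n)) ℝ) (hQ : ∀ n, (Q n)ᵀ * Q n = 1) :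
    tnorm (fun x => A x - multiProj A (fun n => Q n * (Q n)ᵀ) x) ^ 2 ≤
      ∑ n : Fin N,
        tnorm (tmul (compress A (Finset.Iio n) Q) n
          (((1 : Matrix (Fin (I n)) (Fin (I n)) ℝ) - Q n * (Q n)ᵀ).submatrix
            (Fin.cast (if_neg (by simp))) (Fin.cast (if_neg (by simp))))) ^ 2 := by
  have hP : ∀ n, (Q n * (Q n)ᵀ)ᵀ * (Q n * (Q n)ᵀ) = Q n * (Q n)ᵀ := fun n => by
    rw [transpose_mul, transpose_transpose, Matrix.mul_assoc, ← Matrix.mul_assoc (Q n)ᵀ, hQ,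
      Matrix.one_mul]
  have error_eq : (fun x => A x - multiProj A (fun n => Q n * (Q n)ᵀ) x) =
      (∑ n, piKron (telescopeFactors (fun n => Q n * (Q n)ᵀ) n)) *ᵥ A := by
    rw [← one_sub_piKron_eq_sum, sub_mulVec, one_mulVec, multiProj_eq_piKron_mulVec]
    rfl
  rw [error_eq,
    tnorm_sum_mulVec_sq _ fun _ _ h => transpose_piKron_telescopeFactors_mul_of_ne hP h]
  refine (Finset.sum_congr rfl fun n _ => ?_).le
  rw [tnorm_tmul_compress_sq Q A (by simp), tnorm_mulVec_sq,
    transpose_piKron_telescopeFactors_mul_self hP, transpose_one_sub_mul_one_sub (hP n),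
    telescopeFactors_eq_update]
  simp only [Finset.mem_Iio]

end
end

section
/- (Expectation bound for sampled matrix multiplication with nearly optimal probabilities.) Let A ∈ ℝ^{I_1×I_2}, B ∈ ℝ^{I_2×I_3}, let K ≥ 1, let 0 < β ≤ 1, and let p ∈ [0,1]^{I_2} be a probability distribution with p_i ≥ β ‖A(:,i)‖_2 ‖B(i,:)‖_2 / ∑_j ‖A(:,j)‖_2 ‖B(j,:)‖_2 for all i with nonzero numerator. Sample indices ξ_1,…,ξ_K i.i.d. from p and form C ∈ ℝ^{I_1×K}, R ∈ ℝ^{K×I_3} with C(:,t) = A(:,ξ_t)/√(K p_{ξ_t}) and R(t,:) = B(ξ_t,:)/√(K p_{ξ_t}). Then E‖AB − CR‖_F^2 ≤ (1/(βK)) ‖A‖_F^2 ‖B‖_F^2. -/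
open Matrix

noncomputable section

lemma sum_prod_eq {K n : ℕ} (F : Fin K → Fin n → ℝ) :
    ∑ ξ : Fin K → Fin n, ∏ t, F t (ξ t) = ∏ t, ∑ i, F t i := by
  rw [Finset.prod_univ_sum, Fintype.piFinset_univ]

lemma marg0 {K n : ℕ} (p : Fin n → ℝ) (hp1 : ∑ i, p i = 1) :
    ∑ ξ : Fin K → Fin n, (∏ t, p (ξ t)) = 1 := by
  rw [sum_prod_eq (fun _ i => p i)]; simp [hp1]

lemma marg1 {K n : ℕ} (p : Fin n → ℝ) (hp1 : ∑ i, p i = 1) (t0 : Fin K) (f : Fin n → ℝ) :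
    ∑ ξ : Fin K → Fin n, (∏ t, p (ξ t)) * f (ξ t0) = ∑ i, p i * f i := by
  have h1 : ∀ ξ : Fin K → Fin n, (∏ t, p (ξ t)) * f (ξ t0)
      = ∏ t, (p (ξ t) * (if t = t0 then f (ξ t) else 1)) := by
    intro ξ
    rw [Finset.prod_mul_distrib, Finset.prod_ite_eq']
    simp
  simp_rw [h1]
  rw [sum_prod_eq (fun t i => p i * (if t = t0 then f i else 1))]
  have h2 : ∀ t : Fin K, (∑ i, p i * (if t = t0 then f i else 1))
      = if t = t0 then (∑ i, p i * f i) else 1 := by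
    intro t; split_ifs with h <;> simp [hp1]
  simp_rw [h2]
  rw [Finset.prod_ite_eq']
  simp

lemma marg2 {K n : ℕ} (p : Fin n → ℝ) (hp1 : ∑ i, p i = 1) (t0 s0 : Fin K) (hts : t0 ≠ s0)
    (f g : Fin n → ℝ) :
    ∑ ξ : Fin K → Fin n, (∏ t, p (ξ t)) * (f (ξ t0) * g (ξ s0))
      = (∑ i, p i * f i) * (∑ i, p i * g i) := by
  have h1 : ∀ ξ : Fin K → Fin n, (∏ t, p (ξ t)) * (f (ξ t0) * g (ξ s0))
      = ∏ t, (p (ξ t) * (if t = t0 then f (ξ t) else 1) * (if t = s0 then g (ξ t) else 1)) := by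
    intro ξ
    rw [Finset.prod_mul_distrib, Finset.prod_mul_distrib, Finset.prod_ite_eq',
      Finset.prod_ite_eq']
    simp [mul_assoc]
  simp_rw [h1]
  rw [sum_prod_eq (fun t i => p i * (if t = t0 then f i else 1) * (if t = s0 then g i else 1))]
  have h2 : ∀ t : Fin K, (∑ i, p i * (if t = t0 then f i else 1) * (if t = s0 then g i else 1))
      = (if t = t0 then (∑ i, p i * f i) else 1) * (if t = s0 then (∑ i, p i * g i) else 1) := by
    intro t
    split_ifs with h h' h'' <;> simp_all [hp1]
  simp_rw [h2]
  rw [Finset.prod_mul_distrib, Finset.prod_ite_eq', Finset.prod_ite_eq']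
  simp

lemma entry_bound {K n : ℕ} (hK : 1 ≤ K) (p : Fin n → ℝ) (hp0 : ∀ i, 0 ≤ p i)
    (hp1 : ∑ i, p i = 1) (c : Fin n → ℝ) (hc : ∀ i, p i = 0 → c i = 0) :
    ∑ ξ : Fin K → Fin n, (∏ t, p (ξ t)) * ((∑ i, c i) - ∑ t, c (ξ t) / (K * p (ξ t))) ^ 2
      ≤ ∑ i, c i ^ 2 / (K * p i) := by
  have hK0 : (0:ℝ) < (K:ℝ) := by exact_mod_cast hK
  set h : Fin n → ℝ := fun i => c i / (K * p i) with hh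
  set M := ∑ i, c i with hM
  set μ := ∑ i, p i * h i with hμ
  set σ2 := ∑ i, p i * (h i * h i) with hσ2
  have hKμ : (K:ℝ) * μ = M := by
    rw [hμ, hM, Finset.mul_sum]
    refine Finset.sum_congr rfl fun i _ => ?_
    by_cases hpi : p i = 0
    · simp [hh, hpi, hc i hpi]
    · field_simp [hh]
      simp only [hh]
      field_simp
  have hKσ : (K:ℝ) * σ2 = ∑ i, c i ^ 2 / (K * p i) := by
    rw [hσ2, Finset.mul_sum]
    refine Finset.sum_congr rfl fun i _ => ?_
    by_cases hpi : p i = 0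
    · simp [hh, hpi]
    · field_simp [hh]
      simp only [hh]
      field_simp
  have e1 : ∑ ξ : Fin K → Fin n, (∏ t, p (ξ t)) * (∑ t, h (ξ t)) = (K:ℝ) * μ := by
    simp_rw [Finset.mul_sum]
    rw [Finset.sum_comm]
    have : ∀ t : Fin K, ∑ ξ : Fin K → Fin n, (∏ u, p (ξ u)) * h (ξ t) = μ :=
      fun t => marg1 p hp1 t h
    simp_rw [this]
    simp [mul_comm]
  have key : ∀ t s : Fin K, ∑ ξ : Fin K → Fin n, (∏ u, p (ξ u)) * (h (ξ t) * h (ξ s))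
      = if t = s then σ2 else μ * μ := by
    intro t s
    by_cases hts : t = s
    · subst hts
      simp only [if_pos rfl]
      exact marg1 p hp1 t (fun i => h i * h i)
    · rw [if_neg hts]
      exact marg2 p hp1 t s hts h h
  have e2 : ∑ ξ : Fin K → Fin n, (∏ t, p (ξ t)) * (∑ t, ∑ s, h (ξ t) * h (ξ s))
      = (K:ℝ) * σ2 + ((K:ℝ)^2 - K) * (μ * μ) := by
    simp_rw [Finset.mul_sum]
    rw [Finset.sum_comm]
    have swap2 : ∀ t : Fin K, ∑ ξ : Fin K → Fin n, ∑ s, (∏ u, p (ξ u)) * (h (ξ t) * h (ξ s))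
        = ∑ s, ∑ ξ : Fin K → Fin n, (∏ u, p (ξ u)) * (h (ξ t) * h (ξ s)) :=
      fun t => Finset.sum_comm
    simp_rw [swap2, key]
    have inner : ∀ t : Fin K, ∑ s, (if t = s then σ2 else μ * μ)
        = (K:ℝ) * (μ * μ) + (σ2 - μ * μ) := by
      intro t
      have : ∀ s : Fin K, (if t = s then σ2 else μ * μ)
          = μ * μ + (if t = s then σ2 - μ * μ else 0) := by
        intro s; split_ifs <;> ring
      simp_rw [this]
      rw [Finset.sum_add_distrib, Finset.sum_ite_eq]
      simp [mul_comm]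
    simp_rw [inner]
    simp
    ring
  have expand : ∀ ξ : Fin K → Fin n, (M - ∑ t, h (ξ t)) ^ 2
      = M ^ 2 - 2 * M * (∑ t, h (ξ t)) + (∑ t, ∑ s, h (ξ t) * h (ξ s)) := by
    intro ξ
    rw [← Finset.sum_mul_sum]
    ring
  have step : ∑ ξ : Fin K → Fin n, (∏ t, p (ξ t)) * (M - ∑ t, h (ξ t)) ^ 2
      = M ^ 2 * (∑ ξ : Fin K → Fin n, (∏ t, p (ξ t)))
        - 2 * M * ((K:ℝ) * μ) + ((K:ℝ) * σ2 + ((K:ℝ)^2 - K) * (μ * μ)) := by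
    simp_rw [expand]
    have hre : ∀ ξ : Fin K → Fin n, (∏ t, p (ξ t)) *
        (M ^ 2 - 2 * M * (∑ t, h (ξ t)) + (∑ t, ∑ s, h (ξ t) * h (ξ s)))
        = M ^ 2 * (∏ t, p (ξ t))
          - (2 * M) * ((∏ t, p (ξ t)) * (∑ t, h (ξ t)))
          + (∏ t, p (ξ t)) * (∑ t, ∑ s, h (ξ t) * h (ξ s)) := fun ξ => by ring
    simp_rw [hre]
    have A0 : ∑ ξ : Fin K → Fin n, M ^ 2 * (∏ t, p (ξ t))
        = M ^ 2 * ∑ ξ : Fin K → Fin n, (∏ t, p (ξ t)) := (Finset.mul_sum _ _ _).symm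
    have A1 : ∑ ξ : Fin K → Fin n, (2 * M) * ((∏ t, p (ξ t)) * (∑ t, h (ξ t)))
        = (2 * M) * ∑ ξ : Fin K → Fin n, (∏ t, p (ξ t)) * (∑ t, h (ξ t)) :=
      (Finset.mul_sum _ _ _).symm
    rw [Finset.sum_add_distrib, Finset.sum_sub_distrib, A0, A1, e1, e2]
  rw [← hKσ]
  calc ∑ ξ : Fin K → Fin n, (∏ t, p (ξ t)) * (M - ∑ t, h (ξ t)) ^ 2
      = M ^ 2 * 1 - 2 * M * ((K:ℝ) * μ) + ((K:ℝ) * σ2 + ((K:ℝ)^2 - K) * (μ * μ)) := by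
        rw [step, marg0 p hp1]
    _ = (K:ℝ) * σ2 - (K:ℝ) * (μ * μ) := by rw [← hKμ]; ring
    _ ≤ (K:ℝ) * σ2 := by nlinarith [mul_self_nonneg μ, hK0.le]

/-- Expectation bound for the BasicMatrixMultiplication algorithm with nearly optimal
probabilities.  The expectation over the i.i.d. sample `ξ : Fin K → Fin I2` (each index
drawn with probability `p i`) is written as the weighted finite sum over all sample tuples. -/
theorem stmt14 {I1 I2 I3 K : ℕ} (hK : 1 ≤ K) {β : ℝ} (hβ0 : 0 < β) (hβ1 : β ≤ 1)
    (A : Matrix (Fin I1) (Fin I2) ℝ) (B : Matrix (Fin I2) (Fin I3) ℝ)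
    (p : Fin I2 → ℝ) (hp0 : ∀ i, 0 ≤ p i) (hp1 : ∑ i, p i = 1)
    (hp : ∀ i, Real.sqrt (∑ a, A a i ^ 2) * Real.sqrt (∑ b, B i b ^ 2) ≠ 0 →
      β * (Real.sqrt (∑ a, A a i ^ 2) * Real.sqrt (∑ b, B i b ^ 2)) /
          (∑ j, Real.sqrt (∑ a, A a j ^ 2) * Real.sqrt (∑ b, B j b ^ 2)) ≤ p i) :
    ∑ ξ : Fin K → Fin I2, (∏ t, p (ξ t)) *
        frob (A * B -
          (Matrix.of fun a t => A a (ξ t) / Real.sqrt (K * p (ξ t))) *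
            (Matrix.of fun t b => B (ξ t) b / Real.sqrt (K * p (ξ t)))) ^ 2 ≤
      1 / (β * K) * (frob A ^ 2 * frob B ^ 2) := by
  have hK0 : (0:ℝ) < (K:ℝ) := by exact_mod_cast hK
  set x : Fin I2 → ℝ := fun i => ∑ a, A a i ^ 2 with hx
  set y : Fin I2 → ℝ := fun i => ∑ b, B i b ^ 2 with hy
  set s : Fin I2 → ℝ := fun i => Real.sqrt (x i) * Real.sqrt (y i) with hs
  set S := ∑ j, s j with hS
  have hx0 : ∀ i, 0 ≤ x i := fun i => Finset.sum_nonneg fun a _ => sq_nonneg _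
  have hy0 : ∀ i, 0 ≤ y i := fun i => Finset.sum_nonneg fun b _ => sq_nonneg _
  have hs0 : ∀ i, 0 ≤ s i := fun i => mul_nonneg (Real.sqrt_nonneg _) (Real.sqrt_nonneg _)
  have hssq : ∀ i, s i ^ 2 = x i * y i := by
    intro i
    rw [hs, mul_pow, Real.sq_sqrt (hx0 i), Real.sq_sqrt (hy0 i)]
  -- zero probability implies zero entries
  have hzero : ∀ i, p i = 0 → ∀ (a : Fin I1) (b : Fin I3), A a i * B i b = 0 := by
    intro i hpi a b
    have hsi : s i = 0 := by
      by_contra hsne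
      have hspos : 0 < s i := (hs0 i).lt_of_ne (Ne.symm hsne)
      have hSpos : 0 < S := lt_of_lt_of_le hspos
        (Finset.single_le_sum (fun j _ => hs0 j) (Finset.mem_univ i))
      have := hp i hsne
      have hlt : 0 < β * s i / S := div_pos (mul_pos hβ0 hspos) hSpos
      rw [hpi] at this
      exact absurd (lt_of_lt_of_le hlt this) (lt_irrefl 0)
    rcases mul_eq_zero.mp hsi with h | h
    · have hxi : x i = 0 := le_antisymm (Real.sqrt_eq_zero'.mp h) (hx0 i)
      have : A a i ^ 2 = 0 :=
        (Finset.sum_eq_zero_iff_of_nonneg (fun a _ => sq_nonneg _)).mp hxi a (Finset.mem_univ a)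
      rw [pow_eq_zero_iff (by norm_num) |>.mp this, zero_mul]
    · have hyi : y i = 0 := le_antisymm (Real.sqrt_eq_zero'.mp h) (hy0 i)
      have : B i b ^ 2 = 0 :=
        (Finset.sum_eq_zero_iff_of_nonneg (fun b _ => sq_nonneg _)).mp hyi b (Finset.mem_univ b)
      rw [pow_eq_zero_iff (by norm_num) |>.mp this, mul_zero]
  -- entry of the difference matrix
  have entry : ∀ (ξ : Fin K → Fin I2) (a : Fin I1) (b : Fin I3),
      (A * B -
        (Matrix.of fun a t => A a (ξ t) / Real.sqrt (K * p (ξ t))) *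
          (Matrix.of fun t b => B (ξ t) b / Real.sqrt (K * p (ξ t)))) a b
      = (∑ i, A a i * B i b) - ∑ t, (A a (ξ t) * B (ξ t) b) / ((K:ℝ) * p (ξ t)) := by
    intro ξ a b
    simp only [Matrix.sub_apply, Matrix.mul_apply, Matrix.of_apply]
    congr 1
    refine Finset.sum_congr rfl fun t _ => ?_
    rw [div_mul_div_comm, Real.mul_self_sqrt (mul_nonneg (Nat.cast_nonneg K) (hp0 _))]
  have frobsq : ∀ (M : Matrix (Fin I1) (Fin I3) ℝ), frob M ^ 2 = ∑ a, ∑ b, (M a b) ^ 2 := by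
    intro M
    exact Real.sq_sqrt (Finset.sum_nonneg fun a _ => Finset.sum_nonneg fun b _ => sq_nonneg _)
  -- step 1: bound by per-entry sums
  have step1 : ∑ ξ : Fin K → Fin I2, (∏ t, p (ξ t)) *
        frob (A * B -
          (Matrix.of fun a t => A a (ξ t) / Real.sqrt (K * p (ξ t))) *
            (Matrix.of fun t b => B (ξ t) b / Real.sqrt (K * p (ξ t)))) ^ 2
      ≤ ∑ a : Fin I1, ∑ b : Fin I3, ∑ i, (A a i * B i b) ^ 2 / ((K:ℝ) * p i) := by
    have lhs_eq : ∑ ξ : Fin K → Fin I2, (∏ t, p (ξ t)) *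
          frob (A * B -
            (Matrix.of fun a t => A a (ξ t) / Real.sqrt (K * p (ξ t))) *
              (Matrix.of fun t b => B (ξ t) b / Real.sqrt (K * p (ξ t)))) ^ 2
        = ∑ a : Fin I1, ∑ b : Fin I3, ∑ ξ : Fin K → Fin I2, (∏ t, p (ξ t)) *
            ((∑ i, A a i * B i b) - ∑ t, (A a (ξ t) * B (ξ t) b) / ((K:ℝ) * p (ξ t))) ^ 2 := by
      simp_rw [frobsq, entry, Finset.mul_sum]
      rw [Finset.sum_comm]
      exact Finset.sum_congr rfl fun a _ => Finset.sum_comm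
    rw [lhs_eq]
    refine Finset.sum_le_sum fun a _ => Finset.sum_le_sum fun b _ => ?_
    exact entry_bound hK p hp0 hp1 (fun i => A a i * B i b) (fun i hpi => hzero i hpi a b)
  refine le_trans step1 ?_
  -- step 2: rewrite per-entry sums as sum over i
  have step2 : ∑ a : Fin I1, ∑ b : Fin I3, ∑ i, (A a i * B i b) ^ 2 / ((K:ℝ) * p i)
      = ∑ i, x i * y i / ((K:ℝ) * p i) := by
    rw [show (∑ a : Fin I1, ∑ b : Fin I3, ∑ i, (A a i * B i b) ^ 2 / ((K:ℝ) * p i))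
        = ∑ i, ∑ a : Fin I1, ∑ b : Fin I3, (A a i * B i b) ^ 2 / ((K:ℝ) * p i) from by
      rw [show (∑ a : Fin I1, ∑ b : Fin I3, ∑ i, (A a i * B i b) ^ 2 / ((K:ℝ) * p i))
          = ∑ a : Fin I1, ∑ i, ∑ b : Fin I3, (A a i * B i b) ^ 2 / ((K:ℝ) * p i) from
        Finset.sum_congr rfl fun a _ => Finset.sum_comm]
      exact Finset.sum_comm]
    refine Finset.sum_congr rfl fun i _ => ?_
    have : ∑ a : Fin I1, ∑ b : Fin I3, (A a i * B i b) ^ 2 / ((K:ℝ) * p i)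
        = (∑ a : Fin I1, ∑ b : Fin I3, (A a i * B i b) ^ 2) / ((K:ℝ) * p i) := by
      rw [show (∑ a : Fin I1, ∑ b : Fin I3, (A a i * B i b) ^ 2 / ((K:ℝ) * p i))
          = ∑ a : Fin I1, (∑ b : Fin I3, (A a i * B i b) ^ 2) / ((K:ℝ) * p i) from
        Finset.sum_congr rfl fun a _ => (Finset.sum_div _ _ _).symm, ← Finset.sum_div]
    rw [this]
    congr 1
    simp_rw [mul_pow]
    exact (Finset.sum_mul_sum _ _ _ _).symm
  rw [step2]
  -- step 3: per-i bound
  have step3 : ∀ i, x i * y i / ((K:ℝ) * p i) ≤ 1 / (β * K) * (S * s i) := by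
    intro i
    by_cases hsi : s i = 0
    · have hxy : x i * y i = 0 := by rw [← hssq i, hsi]; ring
      rw [hxy, zero_div, hsi, mul_zero, mul_zero]
    · have hspos : 0 < s i := (hs0 i).lt_of_ne (Ne.symm hsi)
      have hSpos : 0 < S := lt_of_lt_of_le hspos
        (Finset.single_le_sum (fun j _ => hs0 j) (Finset.mem_univ i))
      have hpi := hp i hsi
      have hd : 0 < β * s i / S := div_pos (mul_pos hβ0 hspos) hSpos
      have h1 : x i * y i / ((K:ℝ) * p i) ≤ x i * y i / ((K:ℝ) * (β * s i / S)) := by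
        refine div_le_div_of_nonneg_left (mul_nonneg (hx0 i) (hy0 i))
          (mul_pos hK0 hd) ?_
        exact mul_le_mul_of_nonneg_left hpi hK0.le
      refine h1.trans (le_of_eq ?_)
      rw [← hssq i]
      field_simp
  calc ∑ i, x i * y i / ((K:ℝ) * p i) ≤ ∑ i, 1 / (β * K) * (S * s i) :=
        Finset.sum_le_sum fun i _ => step3 i
    _ = 1 / (β * K) * (S * S) := by
        rw [← Finset.mul_sum, ← Finset.mul_sum]
    _ ≤ 1 / (β * K) * (frob A ^ 2 * frob B ^ 2) := by
        refine mul_le_mul_of_nonneg_left ?_ (by positivity)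
        have hcs : S ^ 2 ≤ (∑ i, x i) * (∑ i, y i) := by
          have := Finset.sum_mul_sq_le_sq_mul_sq Finset.univ
            (fun i => Real.sqrt (x i)) (fun i => Real.sqrt (y i))
          simpa [Real.sq_sqrt (hx0 _), Real.sq_sqrt (hy0 _), hS, hs] using this
        have hA : frob A ^ 2 = ∑ i, x i := by
          rw [frob, Real.sq_sqrt (by positivity)]
          exact Finset.sum_comm
        have hB : frob B ^ 2 = ∑ i, y i := by
          rw [frob, Real.sq_sqrt (by positivity)]
        rw [hA, hB, ← sq]
        exact hcs

end
end
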